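/- arXiv:2110.15566 — 4 statements merged into one kernel-verified Lean document; each statement's English description precedes it below -/
import Mathlib

section
/- The generating function for pairs of mutually annihilating matrices satisfies: sum over n ≥ 0 of #{(A,B) ∈ Mat_n(F_q)² : AB = BA = 0} / #GL_n(F_q) times x^n equals sum over n ≥ 0 of sum over k from 0 to n of [n choose k]_t / (t;t)_k times x^n, where t = q^{-1}. -/
/-!
For a fixed `A` of rank `r`, the matrices `B` with `A * B = B * A = 0` are the linear maps
`F^n ⧸ im A → ker A`, so there are `q ^ ((n - r) * (n - r))` of them. A matrix of rank `r` is a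
product `J * S` of an `n × r` and an `r × n` matrix of rank `r`, and the pairs `(S, J)` with a given
product form a torsor under `GL_r` acting by `(g⁻¹ * S, J * g)`. Hence the number of rank `r`
matrices is `(∏_{i<r} (q^n - q^i))² / #GL_r`. In terms of `t = q⁻¹` we have
`∏_{i<r} (q^n - q^i) = q^(n r) (t;t)_n / (t;t)_(n-r)` and `#GL_n = q^(n²) (t;t)_n`, and all powers
of `q` cancel in the coefficient of `x^n`, leaving the term `[n choose k]_t / (t;t)_k` for `k = n - r`.
-/

open LinearMap Module Matrix

theorem card_eq_card_mul_of_card_fiber {X Y : Type*} [Finite X] [Finite Y] (φ : X → Y) {c : ℕ}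
    (h : ∀ y, Nat.card {x // φ x = y} = c) : Nat.card X = Nat.card Y * c := by
  cases nonempty_fintype Y
  rw [← Nat.card_congr (Equiv.sigmaFiberEquiv φ), Nat.card_sigma,
    Finset.sum_congr rfl fun y _ => h y, Finset.sum_const, smul_eq_mul, Finset.card_univ,
    Nat.card_eq_fintype_card]

section LinearMap

variable {R M N : Type*} [Ring R] [AddCommGroup M] [Module R M] [AddCommGroup N] [Module R N]

noncomputable def linearMapQuotientSubmoduleEquiv (U : Submodule R M) (K : Submodule R N) :
    {g : M →ₗ[R] N // range g ≤ K ∧ U ≤ ker g} ≃ (M ⧸ U →ₗ[R] K) where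
  toFun g := U.liftQ (g.1.codRestrict K fun x => g.2.1 ⟨x, rfl⟩)
    (by rw [ker_codRestrict]; exact g.2.2)
  invFun h := ⟨K.subtype ∘ₗ h ∘ₗ U.mkQ,
    (range_comp_le_range _ _).trans (by rw [Submodule.range_subtype]),
    fun x hx => by simp [(Submodule.Quotient.mk_eq_zero _).2 hx]⟩
  left_inv g := Subtype.ext (LinearMap.ext fun x => by simp)
  right_inv h := by
    ext x
    simp

variable (F V W : Type*) [Field F] [Fintype F] [AddCommGroup V] [Module F V]
  [AddCommGroup W] [Module F W] [Module.Finite F V] [Module.Finite F W]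

theorem card_linearMap :
    Nat.card (V →ₗ[F] W) = Fintype.card F ^ (finrank F V * finrank F W) := by
  rw [Module.natCard_eq_pow_finrank (K := F), finrank_linearMap, Nat.card_eq_fintype_card]

end LinearMap

namespace Matrix

section Annihilator

variable {F : Type*} [Field F] [Fintype F] {l m n : Type*} [Fintype m] [Fintype n]

theorem mul_eq_zero_iff_range_le_ker {R : Type*} [CommRing R] (A : Matrix l m R)
    (B : Matrix m n R) : A * B = 0 ↔ range B.mulVecLin ≤ ker A.mulVecLin := by
  classical
  rw [range_le_ker_iff, ← mulVecLin_mul, ← toLin'_apply', LinearEquiv.map_eq_zero_iff]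

theorem card_mul_eq_zero_and_mul_eq_zero (A : Matrix m n F) :
    Nat.card {B : Matrix n m F // A * B = 0 ∧ B * A = 0} =
      Fintype.card F ^ ((Fintype.card m - A.rank) * (Fintype.card n - A.rank)) := by
  classical
  have e : {B : Matrix n m F // A * B = 0 ∧ B * A = 0} ≃
      {g : (m → F) →ₗ[F] (n → F) // range g ≤ ker A.mulVecLin ∧ range A.mulVecLin ≤ ker g} :=
    toLin'.toEquiv.subtypeEquiv fun B => by
      simp only [LinearEquiv.coe_toEquiv, toLin'_apply', mul_eq_zero_iff_range_le_ker]
  have hker := finrank_range_add_finrank_ker A.mulVecLin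
  have hquot := Submodule.finrank_quotient_add_finrank (range A.mulVecLin)
  simp only [finrank_fintype_fun_eq_card] at hker hquot
  rw [Nat.card_congr (e.trans (linearMapQuotientSubmoduleEquiv _ _)), card_linearMap]
  congr 2 <;> simp only [rank] <;> omega

end Annihilator

section Factorization

variable {R : Type*} [CommRing R] {k m n : Type*} [Fintype k] [DecidableEq k] [Fintype m]
  [Fintype n]

noncomputable def fullRankFactorizationEquiv {S₀ : Matrix k n R} {J₀ : Matrix m k R}
    {T₀ : Matrix n k R} {L₀ : Matrix k m R} (hS₀ : S₀ * T₀ = 1) (hJ₀ : L₀ * J₀ = 1) :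
    {p : Matrix k n R × Matrix m k R //
      (∃ T : Matrix n k R, p.1 * T = 1) ∧ (∃ L : Matrix k m R, L * p.2 = 1) ∧
        p.2 * p.1 = J₀ * S₀} ≃ GL k R where
  toFun p :=
    have h : L₀ * p.1.2 * (p.1.1 * T₀) = 1 := by
      rw [Matrix.mul_assoc, ← Matrix.mul_assoc p.1.2, p.2.2.2, Matrix.mul_assoc J₀, hS₀,
        Matrix.mul_one, hJ₀]
    ⟨L₀ * p.1.2, p.1.1 * T₀, h, mul_eq_one_comm.1 h⟩
  invFun g := ⟨(g⁻¹.val * S₀, J₀ * g.val),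
    ⟨T₀ * g.val, by rw [Matrix.mul_assoc, ← Matrix.mul_assoc S₀, hS₀, Matrix.one_mul, Units.inv_mul]⟩,
    ⟨g⁻¹.val * L₀, by rw [Matrix.mul_assoc, ← Matrix.mul_assoc L₀, hJ₀, Matrix.one_mul,
      Units.inv_mul]⟩,
    by rw [Matrix.mul_assoc, ← Matrix.mul_assoc g.val, Units.mul_inv, Matrix.one_mul]⟩
  left_inv := by
    rintro ⟨⟨S, J⟩, ⟨T, hT⟩, ⟨L, hL⟩, hJS⟩
    dsimp only at hT hL hJS ⊢
    ext1
    refine Prod.ext ?_ ?_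
    · show S * T₀ * S₀ = S
      calc S * T₀ * S₀ = L * (J * S) * T₀ * S₀ := by rw [← Matrix.mul_assoc, hL, Matrix.one_mul]
        _ = L * J₀ * (S₀ * T₀) * S₀ := by rw [hJS]; simp only [Matrix.mul_assoc]
        _ = S := by rw [hS₀, Matrix.mul_one, Matrix.mul_assoc, ← hJS, ← Matrix.mul_assoc, hL,
          Matrix.one_mul]
    · show J₀ * (L₀ * J) = J
      calc J₀ * (L₀ * J) = J₀ * (L₀ * (J * S * T)) := by rw [Matrix.mul_assoc J, hT, Matrix.mul_one]
        _ = J₀ * (L₀ * J₀) * S₀ * T := by rw [hJS]; simp only [Matrix.mul_assoc]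
        _ = J := by rw [hJ₀, Matrix.mul_one, ← hJS, Matrix.mul_assoc, hT, Matrix.mul_one]
  right_inv g := by
    ext1
    show L₀ * (J₀ * g.val) = g.val
    rw [← Matrix.mul_assoc, hJ₀, Matrix.one_mul]

end Factorization

section Rank

variable {F : Type*} [Field F] {k m n : Type*} [Fintype k] [DecidableEq k] [Fintype n]

theorem exists_mul_eq_one_iff_rank_eq (S : Matrix k n F) :
    (∃ T : Matrix n k F, S * T = 1) ↔ S.rank = Fintype.card k := by
  constructor
  · rintro ⟨T, hT⟩
    refine le_antisymm S.rank_le_card_height ?_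
    calc Fintype.card k = (S * T).rank := by rw [hT, rank_one]
      _ ≤ S.rank := rank_mul_le_left S T
  · intro h
    rw [← mulVec_surjective_iff_exists_right_inverse, ← coe_mulVecLin, ← range_eq_top]
    exact Submodule.eq_top_of_finrank_eq (by rw [← rank, h, finrank_fintype_fun_eq_card])

theorem exists_mul_eq_of_rank_eq {A : Matrix m n F} {r : ℕ} (hA : A.rank = r) :
    ∃ (J : Matrix m (Fin r) F) (S : Matrix (Fin r) n F), J * S = A := by
  classical
  obtain ⟨e⟩ := FiniteDimensional.nonempty_linearEquiv_of_finrank_eq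
    (M := range A.mulVecLin) (M' := Fin r → F) (by rw [finrank_fin_fun]; exact hA)
  refine ⟨toMatrix' ((range A.mulVecLin).subtype ∘ₗ e.symm.toLinearMap),
    toMatrix' (e.toLinearMap ∘ₗ A.mulVecLin.rangeRestrict), ?_⟩
  conv_rhs => rw [← toMatrix'_toLin' A, toLin'_apply']
  rw [← toMatrix'_comp]
  congr 1
  ext v
  simp

variable [Fintype m]

theorem exists_mul_eq_one_iff_rank_eq' (J : Matrix m k F) :
    (∃ L : Matrix k m F, L * J = 1) ↔ J.rank = Fintype.card k := by
  rw [← rank_transpose, ← exists_mul_eq_one_iff_rank_eq]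
  refine ⟨fun ⟨L, hL⟩ => ⟨Lᵀ, by rw [← transpose_mul, hL, transpose_one]⟩,
    fun ⟨T, hT⟩ => ⟨Tᵀ, by rw [← transpose_transpose J, ← transpose_mul, hT, transpose_one]⟩⟩

theorem rank_mul_of_exists_mul_eq_one {S : Matrix k n F} {J : Matrix m k F}
    (hS : ∃ T : Matrix n k F, S * T = 1) (hJ : ∃ L : Matrix k m F, L * J = 1) :
    (J * S).rank = Fintype.card k := by
  obtain ⟨T, hT⟩ := hS
  obtain ⟨L, hL⟩ := hJ
  refine le_antisymm ((rank_mul_le_right J S).trans S.rank_le_card_height) ?_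
  calc Fintype.card k = (L * (J * S) * T).rank := by
        rw [← Matrix.mul_assoc, hL, Matrix.one_mul, hT, rank_one]
    _ ≤ (J * S).rank := (rank_mul_le_left _ T).trans (rank_mul_le_right L _)

theorem rank_eq_card_height_iff (A : Matrix m n F) :
    A.rank = Fintype.card m ↔ LinearIndependent F A.row := by
  rw [rank_eq_finrank_span_row, linearIndependent_iff_card_eq_finrank_span, Set.finrank, eq_comm]

theorem card_factorizations_eq_card_GL {A : Matrix m n F} {r : ℕ} (hA : A.rank = r) :
    Nat.card {p : Matrix (Fin r) n F × Matrix m (Fin r) F //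
      (p.1.rank = r ∧ p.2.rank = r) ∧ p.2 * p.1 = A} = Nat.card (GL (Fin r) F) := by
  obtain ⟨J₀, S₀, rfl⟩ := exists_mul_eq_of_rank_eq hA
  have hJ₀ : J₀.rank = Fintype.card (Fin r) :=
    le_antisymm J₀.rank_le_card_width
      ((Fintype.card_fin r).trans hA.symm |>.trans_le (rank_mul_le_left _ _))
  have hS₀ : S₀.rank = Fintype.card (Fin r) :=
    le_antisymm S₀.rank_le_card_height
      ((Fintype.card_fin r).trans hA.symm |>.trans_le (rank_mul_le_right _ _))
  obtain ⟨T₀, hT₀⟩ := (exists_mul_eq_one_iff_rank_eq S₀).2 hS₀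
  obtain ⟨L₀, hL₀⟩ := (exists_mul_eq_one_iff_rank_eq' J₀).2 hJ₀
  rw [← Nat.card_congr (fullRankFactorizationEquiv hT₀ hL₀)]
  refine Nat.card_congr (Equiv.subtypeEquivRight fun p => ?_)
  rw [exists_mul_eq_one_iff_rank_eq, exists_mul_eq_one_iff_rank_eq', Fintype.card_fin, and_assoc]

end Rank

section Count

variable {F : Type*} [Field F] [Fintype F] {m n : Type*} [Fintype m] [Fintype n]

theorem card_rank_eq_card_width {r : ℕ} (hr : r ≤ Fintype.card m) :
    Nat.card {J : Matrix m (Fin r) F // J.rank = r} =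
      ∏ i : Fin r, (Fintype.card F ^ Fintype.card m - Fintype.card F ^ (i : ℕ)) := by
  have e : {J : Matrix m (Fin r) F // J.rank = r} ≃ {s : Fin r → m → F // LinearIndependent F s} :=
    (transposeAddEquiv _ _ F).toEquiv.subtypeEquiv fun J => by
      change J.rank = r ↔ LinearIndependent F Jᵀ.row
      rw [← rank_eq_card_height_iff, rank_transpose, Fintype.card_fin]
  rw [Nat.card_congr e, card_linearIndependent (by rwa [finrank_fintype_fun_eq_card]),
    finrank_fintype_fun_eq_card]

theorem card_rank_eq_card_height {r : ℕ} (hr : r ≤ Fintype.card n) :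
    Nat.card {S : Matrix (Fin r) n F // S.rank = r} =
      ∏ i : Fin r, (Fintype.card F ^ Fintype.card n - Fintype.card F ^ (i : ℕ)) := by
  rw [← card_rank_eq_card_width hr]
  exact Nat.card_congr ((transposeAddEquiv _ _ F).toEquiv.subtypeEquiv fun S => by
    simp [rank_transpose])

theorem card_rank_eq_mul_card_GL {r : ℕ} (hm : r ≤ Fintype.card m) (hn : r ≤ Fintype.card n) :
    Nat.card {A : Matrix m n F // A.rank = r} * Nat.card (GL (Fin r) F) =
      (∏ i : Fin r, (Fintype.card F ^ Fintype.card m - Fintype.card F ^ (i : ℕ))) *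
        ∏ i : Fin r, (Fintype.card F ^ Fintype.card n - Fintype.card F ^ (i : ℕ)) := by
  let φ : {p : Matrix (Fin r) n F × Matrix m (Fin r) F // p.1.rank = r ∧ p.2.rank = r} →
      {A : Matrix m n F // A.rank = r} := fun p =>
    ⟨p.1.2 * p.1.1, by
      rw [rank_mul_of_exists_mul_eq_one ((exists_mul_eq_one_iff_rank_eq _).2 (by simp [p.2.1]))
        ((exists_mul_eq_one_iff_rank_eq' _).2 (by simp [p.2.2])), Fintype.card_fin]⟩
  have hcard : Nat.card {p : Matrix (Fin r) n F × Matrix m (Fin r) F // p.1.rank = r ∧ p.2.rank = r}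
      = (∏ i : Fin r, (Fintype.card F ^ Fintype.card m - Fintype.card F ^ (i : ℕ))) *
        ∏ i : Fin r, (Fintype.card F ^ Fintype.card n - Fintype.card F ^ (i : ℕ)) := by
    rw [Nat.card_congr (Equiv.subtypeProdEquivProd (p := fun S : Matrix (Fin r) n F => S.rank = r)
      (q := fun J : Matrix m (Fin r) F => J.rank = r)), Nat.card_prod,
      card_rank_eq_card_height hn, card_rank_eq_card_width hm, mul_comm]
  rw [← hcard]
  refine (card_eq_card_mul_of_card_fiber φ fun A => ?_).symm
  rw [← card_factorizations_eq_card_GL A.2]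
  exact Nat.card_congr ((Equiv.subtypeEquivRight fun x => Subtype.ext_iff).trans
    (Equiv.subtypeSubtypeEquivSubtypeInter _
      fun p : Matrix (Fin r) n F × Matrix m (Fin r) F => p.2 * p.1 = A.1))

theorem card_annihilatingPairs :
    Nat.card {p : Matrix m n F × Matrix n m F // p.1 * p.2 = 0 ∧ p.2 * p.1 = 0} =
      ∑ r ∈ Finset.range (Fintype.card n + 1), Nat.card {A : Matrix m n F // A.rank = r} *
        Fintype.card F ^ ((Fintype.card m - r) * (Fintype.card n - r)) := by
  classical
  rw [Nat.card_congr (Equiv.subtypeProdEquivSigmaSubtype fun A B => A * B = 0 ∧ B * A = 0),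
    Nat.card_sigma]
  simp_rw [card_mul_eq_zero_and_mul_eq_zero]
  rw [← Finset.sum_fiberwise_of_maps_to (g := rank)
    fun A _ => Finset.mem_range_succ_iff.2 A.rank_le_card_width]
  refine Finset.sum_congr rfl fun r _ => ?_
  rw [Finset.sum_congr rfl fun A hA => by rw [(Finset.mem_filter.1 hA).2], Finset.sum_const,
    smul_eq_mul, Nat.card_eq_fintype_card, Fintype.card_subtype]

end Count

end Matrix

def qPochhammer {K : Type*} [CommRing K] (t : K) (m : ℕ) : K :=
  ∏ i ∈ Finset.range m, (1 - t ^ (i + 1))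

section qPochhammer

variable {K : Type*} [Field K]

theorem qPochhammer_zero (t : K) : qPochhammer t 0 = 1 := Finset.prod_range_zero _

theorem qPochhammer_succ (t : K) (m : ℕ) :
    qPochhammer t (m + 1) = qPochhammer t m * (1 - t ^ (m + 1)) :=
  Finset.prod_range_succ _ _

theorem qPochhammer_pos [LinearOrder K] [IsStrictOrderedRing K] {t : K} (h0 : 0 ≤ t) (h1 : t < 1)
    (m : ℕ) : 0 < qPochhammer t m :=
  Finset.prod_pos fun i _ => sub_pos.2 (pow_lt_one₀ h0 h1 i.succ_ne_zero)

theorem prod_pow_sub_pow_mul_qPochhammer {q : K} (hq : q ≠ 0) (k r : ℕ) :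
    (∏ i ∈ Finset.range r, (q ^ (k + r) - q ^ i)) * qPochhammer q⁻¹ k =
      q ^ ((k + r) * r) * qPochhammer q⁻¹ (k + r) := by
  induction r generalizing k with
  | zero => simp
  | succ r ih =>
    have hfactor : q ^ (k + 1 + r) - q ^ r = q ^ (k + 1 + r) * (1 - q⁻¹ ^ (k + 1)) := by
      rw [mul_sub, mul_one, inv_pow, add_comm (k + 1) r, pow_add,
        mul_inv_cancel_right₀ (pow_ne_zero _ hq)]
    have ih' := ih (k + 1)
    rw [qPochhammer_succ] at ih'
    rw [Finset.prod_range_succ, show k + (r + 1) = k + 1 + r by ring]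
    linear_combination q ^ (k + 1 + r) * ih' +
      (∏ i ∈ Finset.range r, (q ^ (k + 1 + r) - q ^ i)) * qPochhammer q⁻¹ k * hfactor

end qPochhammer

theorem cast_prod_pow_sub_pow {K : Type*} [CommRing K] {q n r : ℕ} (hq : 0 < q) (hr : r ≤ n) :
    ((∏ i : Fin r, (q ^ n - q ^ (i : ℕ)) : ℕ) : K) =
      ∏ i ∈ Finset.range r, ((q : K) ^ n - (q : K) ^ i) := by
  rw [Nat.cast_prod, Fin.prod_univ_eq_prod_range (fun i => ((q ^ n - q ^ i : ℕ) : K))]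
  refine Finset.prod_congr rfl fun i hi => ?_
  rw [Nat.cast_sub (Nat.pow_le_pow_right hq ((Finset.mem_range.1 hi).le.trans hr)), Nat.cast_pow,
    Nat.cast_pow]

section FiniteField

variable (F : Type*) [Field F] [Fintype F]

local notation "q" => (Fintype.card F : ℚ)

theorem card_GL_eq_qPochhammer (n : ℕ) :
    (Nat.card (GL (Fin n) F) : ℚ) = q ^ (n * n) * qPochhammer q⁻¹ n := by
  have hq : q ≠ 0 := by positivity
  have h := prod_pow_sub_pow_mul_qPochhammer hq 0 n
  rw [card_GL_field, cast_prod_pow_sub_pow Fintype.card_pos le_rfl]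
  simpa [qPochhammer_zero] using h

theorem card_rank_eq_mul_pow_div_card_GL (k r : ℕ) :
    (Nat.card {A : Matrix (Fin (k + r)) (Fin (k + r)) F // A.rank = r} : ℚ) * q ^ (k * k) /
        Nat.card (GL (Fin (k + r)) F) =
      qPochhammer q⁻¹ (k + r) / (qPochhammer q⁻¹ k * qPochhammer q⁻¹ r) / qPochhammer q⁻¹ k := by
  have hq : q ≠ 0 := by positivity
  have hP := qPochhammer_pos (by positivity : (0 : ℚ) ≤ q⁻¹)
    (inv_lt_one_of_one_lt₀ (Nat.one_lt_cast.2 Fintype.one_lt_card))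
  have hN := congrArg (Nat.cast : ℕ → ℚ) (card_rank_eq_mul_card_GL (F := F)
    (m := Fin (k + r)) (n := Fin (k + r)) (r := r) (by simp) (by simp))
  simp only [Nat.cast_mul, Fintype.card_fin, card_GL_eq_qPochhammer,
    cast_prod_pow_sub_pow Fintype.card_pos (Nat.le_add_left r k)] at hN
  have hI := prod_pow_sub_pow_mul_qPochhammer hq k r
  rw [card_GL_eq_qPochhammer, div_div, div_eq_div_iff (by positivity [hP (k + r)])
    (by positivity [hP k, hP r])]
  apply mul_left_cancel₀ (pow_ne_zero (r * r) hq)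
  linear_combination q ^ (k * k) * qPochhammer q⁻¹ k ^ 2 * hN +
    q ^ (k * k) * ((∏ i ∈ Finset.range r, (q ^ (k + r) - q ^ i)) * qPochhammer q⁻¹ k +
      q ^ ((k + r) * r) * qPochhammer q⁻¹ (k + r)) * hI

end FiniteField

/-- The generating function for pairs of mutually annihilating matrices:
`∑_{n≥0} #{(A,B) ∈ Mat_n(F_q)² : AB = BA = 0} / #GL_n(F_q) · x^n
  = ∑_{n≥0} (∑_{k=0}^n [n choose k]_t / (t;t)_k) · x^n`, where `t = q⁻¹`,
as formal power series in `x` over `ℚ`. -/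
theorem stmt_3 (F : Type*) [Field F] [Fintype F] (t : ℚ)
    (ht : t = (Fintype.card F : ℚ)⁻¹) :
    PowerSeries.mk (fun n =>
      (Nat.card {p : Matrix (Fin n) (Fin n) F × Matrix (Fin n) (Fin n) F //
          p.1 * p.2 = 0 ∧ p.2 * p.1 = 0} : ℚ) /
        (Nat.card (Matrix.GeneralLinearGroup (Fin n) F) : ℚ)) =
    PowerSeries.mk (fun n => ∑ k ∈ Finset.range (n + 1),
      ((∏ i ∈ Finset.range n, (1 - t ^ (i + 1))) /
        ((∏ i ∈ Finset.range k, (1 - t ^ (i + 1))) *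
          ∏ i ∈ Finset.range (n - k), (1 - t ^ (i + 1)))) /
      ∏ i ∈ Finset.range k, (1 - t ^ (i + 1))) := by
  subst ht
  ext n
  rw [PowerSeries.coeff_mk, PowerSeries.coeff_mk, card_annihilatingPairs, Fintype.card_fin,
    Nat.cast_sum, Finset.sum_div, ← Finset.sum_range_reflect]
  refine Finset.sum_congr rfl fun k hk => ?_
  obtain ⟨r, rfl⟩ : ∃ r, n = k + r := Nat.exists_eq_add_of_le (Finset.mem_range_succ_iff.1 hk)
  simp only [Nat.add_sub_cancel, Nat.add_sub_cancel_left, Nat.cast_mul, Nat.cast_pow]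
  exact card_rank_eq_mul_pow_div_card_GL F k r
end

section
/- There is a bijection between the set of partitions with zeros λ having first Durfee square of side k and second Durfee square of side l, and the set of triples (λ'', λ⁽¹⁾, λ⁽²⁾) where λ⁽¹⁾ is a partition with at most k parts, λ⁽²⁾ is a partition fitting in an l × (k-l) rectangle, and λ'' is a partition with zeros whose parts are at most l; under this bijection |λ| = |λ⁽¹⁾| + |λ⁽²⁾| + |λ''| + k² + l² and ℓ(λ) = k + l + ℓ(λ''). -/
/-!
Cut a partition `λ` with Durfee sides `k` and `l` into its first `k` rows, the next `l` rows and
the remaining rows. Every one of the first `k` rows is at least `k` and every one of the next `l`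
rows lies between `l` and `k`, so removing the two squares leaves `λ⁽¹⁾` and `λ⁽²⁾`, and the
remaining rows, all at most `l`, form `λ''`. Conversely, gluing the squares back onto any such
triple yields a nonincreasing sequence whose rows `i` with `i < λ i` are exactly the first `k`,
and the same holds for the `l` rows below them, so the Durfee sides are recovered.
-/

/-- The side length of the (first) Durfee square of a partition with zeros,
encoded as a nonincreasing function `f : Fin ℓ → ℕ`. -/
def durfeeSide {ℓ : ℕ} (f : Fin ℓ → ℕ) : ℕ :=
  (Finset.univ.filter fun i : Fin ℓ => (i : ℕ) < f i).card

/-- The side length of the second Durfee square: the Durfee square side of the rows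
below the first Durfee square. -/
def durfeeSide₂ {ℓ : ℕ} (f : Fin ℓ → ℕ) : ℕ :=
  durfeeSide (fun j : Fin (ℓ - durfeeSide f) =>
    f ⟨durfeeSide f + j.1, by have := j.2; omega⟩)

theorem Fin.antitone_append {α : Type*} [Preorder α] {m n : ℕ} {u : Fin m → α} {v : Fin n → α}
    (hu : Antitone u) (hv : Antitone v) (huv : ∀ i j, v j ≤ u i) : Antitone (Fin.append u v) := by
  intro i j hij
  induction i using Fin.addCases with
  | left i =>
    induction j using Fin.addCases with
    | left j => simpa using hu hij
    | right j => simpa using huv i j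
  | right i =>
    induction j using Fin.addCases with
    | left j => simp only [Fin.le_def, Fin.val_natAdd, Fin.val_castAdd] at hij; omega
    | right j => simpa using hv (show i ≤ j by simpa using hij)

theorem Sigma.fin_ext {α : Type*} {p q : Σ m, Fin m → α} (h : p.1 = q.1)
    (hf : ∀ i, p.2 i = q.2 (Fin.cast h i)) : p = q :=
  Sigma.ext h ((Fin.heq_fun_iff h).2 hf)

section Durfee

variable {ℓ k l : ℕ} {f : Fin ℓ → ℕ}

def dropRows (f : Fin ℓ → ℕ) (k : ℕ) : Fin (ℓ - k) → ℕ := fun j => f ⟨k + j, by omega⟩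

theorem antitone_dropRows (hf : Antitone f) (k : ℕ) : Antitone (dropRows f k) :=
  fun i j hij => hf (Fin.mk_le_mk.2 (by simpa using hij))

theorem durfeeSide₂_eq_durfeeSide_dropRows (hk : durfeeSide f = k) :
    durfeeSide₂ f = durfeeSide (dropRows f k) := by
  subst hk; rfl

theorem durfeeSide_le (f : Fin ℓ → ℕ) : durfeeSide f ≤ ℓ :=
  (Finset.card_filter_le _ _).trans (Finset.card_fin ℓ).le

theorem add_le_of_durfeeSide_eq (hk : durfeeSide f = k) (hl : durfeeSide₂ f = l) :
    k + l ≤ ℓ := by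
  rw [durfeeSide₂_eq_durfeeSide_dropRows hk] at hl
  have := durfeeSide_le (dropRows f k)
  have := durfeeSide_le f
  omega

theorem durfeeSide_eq_of_forall_lt_iff (hk : k ≤ ℓ)
    (h : ∀ i : Fin ℓ, (i : ℕ) < f i ↔ (i : ℕ) < k) : durfeeSide f = k := by
  rw [durfeeSide, Finset.filter_congr fun i _ => h i, Fin.card_filter_val_lt, min_eq_right hk]

theorem Antitone.lt_apply_iff_lt_durfeeSide (hf : Antitone f) (i : Fin ℓ) :
    (i : ℕ) < f i ↔ (i : ℕ) < durfeeSide f := by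
  set S := Finset.univ.filter fun i : Fin ℓ => (i : ℕ) < f i
  have hdown : ∀ {i j : Fin ℓ}, i ≤ j → j ∈ S → i ∈ S := fun {i j} hij hj => by
    simp only [S, Finset.mem_filter, Finset.mem_univ, true_and] at hj ⊢
    exact lt_of_le_of_lt hij (hj.trans_le (hf hij))
  constructor
  · intro hi
    have := Finset.card_le_card fun j hj => hdown (Finset.mem_Iic.1 hj) (by simpa [S] using hi)
    rw [Fin.card_Iic] at this
    exact this
  · intro hi
    by_contra hni
    have := Finset.card_le_card fun j (hj : j ∈ S) =>
      Finset.mem_Iio.2 (lt_of_not_ge fun hij => hni (by simpa [S] using hdown hij hj))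
    rw [Fin.card_Iio] at this
    exact absurd this (not_le.2 hi)

theorem durfeeSide₂_eq_of_forall_lt_iff (hk : durfeeSide f = k) (hl : k + l ≤ ℓ)
    (h : ∀ i : Fin ℓ, k ≤ i → ((i : ℕ) < k + f i ↔ (i : ℕ) < k + l)) : durfeeSide₂ f = l := by
  rw [durfeeSide₂_eq_durfeeSide_dropRows hk]
  refine durfeeSide_eq_of_forall_lt_iff (by omega) fun j => ?_
  have := h ⟨k + j, by omega⟩ (Nat.le_add_right k j)
  simp only [dropRows] at this ⊢
  omega

theorem Antitone.le_apply_of_lt_durfeeSide (hf : Antitone f) (hk : durfeeSide f = k)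
    {i : Fin ℓ} (hi : (i : ℕ) < k) : k ≤ f i := by
  subst hk
  have hlast : durfeeSide f - 1 < ℓ := by have := durfeeSide_le f; omega
  have h₁ : durfeeSide f - 1 < f ⟨_, hlast⟩ :=
    (hf.lt_apply_iff_lt_durfeeSide ⟨_, hlast⟩).2 (by dsimp only; omega)
  have h₂ : f ⟨_, hlast⟩ ≤ f i := hf (Fin.le_def.2 (by dsimp only; omega))
  omega

theorem Antitone.apply_le_of_durfeeSide_le (hf : Antitone f) (hk : durfeeSide f = k)
    {i : Fin ℓ} (hi : k ≤ i) : f i ≤ k := by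
  subst hk
  have hfirst : durfeeSide f < ℓ := by omega
  have h₁ : ¬durfeeSide f < f ⟨_, hfirst⟩ :=
    (hf.lt_apply_iff_lt_durfeeSide ⟨_, hfirst⟩).not.2 (lt_irrefl _)
  have h₂ : f i ≤ f ⟨_, hfirst⟩ := hf (Fin.le_def.2 hi)
  omega

theorem Antitone.le_apply_of_lt_durfeeSide₂ (hf : Antitone f) (hk : durfeeSide f = k)
    (hl : durfeeSide₂ f = l) {i : Fin ℓ} (hi : (i : ℕ) < k + l) : l ≤ f i := by
  rw [durfeeSide₂_eq_durfeeSide_dropRows hk] at hl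
  obtain rfl | hpos := Nat.eq_zero_or_pos l
  · exact Nat.zero_le _
  have hlast : l - 1 < ℓ - k := by
    have := durfeeSide_le (dropRows f k); omega
  have h₁ : l ≤ dropRows f k ⟨_, hlast⟩ :=
    (antitone_dropRows hf k).le_apply_of_lt_durfeeSide hl (by dsimp only; omega)
  have h₂ : dropRows f k ⟨_, hlast⟩ ≤ f i := hf (Fin.le_def.2 (by dsimp only; omega))
  omega

theorem Antitone.apply_le_of_durfeeSide₂_le (hf : Antitone f) (hk : durfeeSide f = k)
    (hl : durfeeSide₂ f = l) {i : Fin ℓ} (hi : k + l ≤ i) : f i ≤ l := by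
  rw [durfeeSide₂_eq_durfeeSide_dropRows hk] at hl
  have h₁ : dropRows f k ⟨i - k, by omega⟩ ≤ l :=
    (antitone_dropRows hf k).apply_le_of_durfeeSide_le hl (by dsimp only; omega)
  have h₂ : dropRows f k ⟨i - k, by omega⟩ = f i := congrArg f (Fin.ext (by dsimp only; omega))
  omega

end Durfee

section Glue

variable {k l m : ℕ} {g₁ : Fin k → ℕ} {g₂ : Fin l → ℕ} {h : Fin m → ℕ}

/-- The partition with `λ⁽¹⁾ = g₁` right of a `k × k` Durfee square, `λ⁽²⁾ = g₂` right of an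
`l × l` one, and `λ'' = h` below. -/
def durfeeGlue (g₁ : Fin k → ℕ) (g₂ : Fin l → ℕ) (h : Fin m → ℕ) : Fin (k + l + m) → ℕ :=
  Fin.append (Fin.append (fun i => k + g₁ i) fun j => l + g₂ j) h

theorem sum_durfeeGlue (g₁ : Fin k → ℕ) (g₂ : Fin l → ℕ) (h : Fin m → ℕ) :
    ∑ i, durfeeGlue g₁ g₂ h i = ∑ i, g₁ i + ∑ j, g₂ j + ∑ t, h t + k ^ 2 + l ^ 2 := by
  simp only [durfeeGlue, Fin.sum_univ_add, Fin.append_left, Fin.append_right,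
    Finset.sum_add_distrib, Finset.sum_const, Finset.card_univ, Fintype.card_fin, smul_eq_mul]
  ring

theorem antitone_durfeeGlue (hlk : l ≤ k) (hg₁ : Antitone g₁) (hg₂ : Antitone g₂)
    (hg₂k : ∀ j, g₂ j ≤ k - l) (hh : Antitone h) (hhl : ∀ t, h t ≤ l) :
    Antitone (durfeeGlue g₁ g₂ h) := by
  refine Fin.antitone_append (Fin.antitone_append ?_ ?_ fun i j => ?_) hh fun i t => ?_
  · exact fun i j hij => Nat.add_le_add_left (hg₁ hij) k
  · exact fun i j hij => Nat.add_le_add_left (hg₂ hij) l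
  · have := hg₂k j; omega
  · induction i using Fin.addCases with
    | left i => have := hhl t; simp only [Fin.append_left]; omega
    | right j => have := hhl t; simp only [Fin.append_right]; omega

theorem durfeeSide_durfeeGlue (hlk : l ≤ k) (hg₂k : ∀ j, g₂ j ≤ k - l) (hhl : ∀ t, h t ≤ l) :
    durfeeSide (durfeeGlue g₁ g₂ h) = k := by
  refine durfeeSide_eq_of_forall_lt_iff (by omega) fun i => ?_
  induction i using Fin.addCases with
  | left i =>
    induction i using Fin.addCases with
    | left i => simp only [durfeeGlue, Fin.append_left, Fin.val_castAdd]; omega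
    | right j =>
      have := hg₂k j
      simp only [durfeeGlue, Fin.append_left, Fin.append_right, Fin.val_castAdd, Fin.val_natAdd]
      omega
  | right t =>
    have := hhl t
    simp only [durfeeGlue, Fin.append_right, Fin.val_natAdd]
    omega

theorem durfeeSide₂_durfeeGlue (hlk : l ≤ k) (hg₂k : ∀ j, g₂ j ≤ k - l) (hhl : ∀ t, h t ≤ l) :
    durfeeSide₂ (durfeeGlue g₁ g₂ h) = l := by
  refine durfeeSide₂_eq_of_forall_lt_iff (durfeeSide_durfeeGlue hlk hg₂k hhl) (by omega)
    fun i hi => ?_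
  induction i using Fin.addCases with
  | left i =>
    induction i using Fin.addCases with
    | left i => simp only [Fin.val_castAdd] at hi; omega
    | right j =>
      simp only [durfeeGlue, Fin.append_left, Fin.append_right, Fin.val_castAdd, Fin.val_natAdd]
      omega
  | right t =>
    have := hhl t
    simp only [durfeeGlue, Fin.append_right, Fin.val_natAdd]
    omega

end Glue

section Equiv

abbrev DurfeeTriple (k l : ℕ) : Type :=
  {g : Fin k → ℕ // Antitone g} × {g : Fin l → ℕ // Antitone g ∧ ∀ j, g j ≤ k - l} ×
    {p : Σ m, Fin m → ℕ // Antitone p.2 ∧ ∀ t, p.2 t ≤ l}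

abbrev PartitionWithDurfee (k l : ℕ) : Type :=
  {p : Σ m, Fin m → ℕ // Antitone p.2 ∧ durfeeSide p.2 = k ∧ durfeeSide₂ p.2 = l}

variable {k l : ℕ}

theorem PartitionWithDurfee.add_le_length (p : PartitionWithDurfee k l) : k + l ≤ p.1.1 :=
  add_le_of_durfeeSide_eq p.2.2.1 p.2.2.2

def PartitionWithDurfee.split (p : PartitionWithDurfee k l) : DurfeeTriple k l :=
  (⟨fun i => p.1.2 ⟨i, by have := p.add_le_length; omega⟩ - k,
      fun i j hij => Nat.sub_le_sub_right (p.2.1 (Fin.mk_le_mk.2 hij)) k⟩,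
    ⟨fun j => p.1.2 ⟨k + j, by have := p.add_le_length; omega⟩ - l,
      fun i j hij => Nat.sub_le_sub_right (p.2.1 (Fin.mk_le_mk.2 (Nat.add_le_add_left hij k))) l,
      fun j => Nat.sub_le_sub_right (p.2.1.apply_le_of_durfeeSide_le p.2.2.1 (by simp)) l⟩,
    ⟨⟨p.1.1 - (k + l), dropRows p.1.2 (k + l)⟩, antitone_dropRows p.2.1 _,
      fun t => p.2.1.apply_le_of_durfeeSide₂_le p.2.2.1 p.2.2.2 (by simp)⟩)

def DurfeeTriple.glue (hlk : l ≤ k) (x : DurfeeTriple k l) : PartitionWithDurfee k l :=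
  ⟨⟨k + l + x.2.2.1.1, durfeeGlue x.1.1 x.2.1.1 x.2.2.1.2⟩,
    antitone_durfeeGlue hlk x.1.2 x.2.1.2.1 x.2.1.2.2 x.2.2.2.1 x.2.2.2.2,
    durfeeSide_durfeeGlue hlk x.2.1.2.2 x.2.2.2.2, durfeeSide₂_durfeeGlue hlk x.2.1.2.2 x.2.2.2.2⟩

def durfeeEquiv (hlk : l ≤ k) : DurfeeTriple k l ≃ PartitionWithDurfee k l where
  toFun := DurfeeTriple.glue hlk
  invFun := PartitionWithDurfee.split
  left_inv := by
    rintro ⟨⟨g₁, _⟩, ⟨g₂, _⟩, ⟨⟨m, h⟩, _⟩⟩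
    refine Prod.ext (Subtype.ext ?_) (Prod.ext (Subtype.ext ?_) (Subtype.ext ?_))
    · funext i
      show durfeeGlue g₁ g₂ h (Fin.castAdd m (Fin.castAdd l i)) - k = g₁ i
      simp [durfeeGlue]
    · funext j
      show durfeeGlue g₁ g₂ h (Fin.castAdd m (Fin.natAdd k j)) - l = g₂ j
      simp [durfeeGlue]
    · refine Sigma.fin_ext (Nat.add_sub_cancel_left ..) fun t => ?_
      show durfeeGlue g₁ g₂ h (Fin.natAdd (k + l) (Fin.cast (Nat.add_sub_cancel_left ..) t)) = _
      exact Fin.append_right _ _ _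
  right_inv := by
    rintro ⟨⟨n, f⟩, hf, hk, hl⟩
    dsimp only at hf hk hl
    have hkl : k + l ≤ n := add_le_of_durfeeSide_eq hk hl
    refine Subtype.ext (Sigma.fin_ext (Nat.add_sub_of_le hkl) fun i => ?_)
    induction i using Fin.addCases with
    | left i =>
      induction i using Fin.addCases with
      | left i =>
        simp only [DurfeeTriple.glue, durfeeGlue, Fin.append_left]
        exact Nat.add_sub_cancel' (hf.le_apply_of_lt_durfeeSide hk (i := ⟨i, by omega⟩) i.2)
      | right j =>
        simp only [DurfeeTriple.glue, durfeeGlue, Fin.append_left, Fin.append_right]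
        exact Nat.add_sub_cancel' (hf.le_apply_of_lt_durfeeSide₂ hk hl (i := ⟨k + j, by omega⟩)
          (by simp))
    | right t => exact Fin.append_right _ _ _

end Equiv

/-- There is a bijection between triples `(λ⁽¹⁾, λ⁽²⁾, λ'')` — where `λ⁽¹⁾` is a partition
with at most `k` parts, `λ⁽²⁾` fits in an `l × (k-l)` rectangle, and `λ''` is a partition
with zeros whose parts are at most `l` — and partitions with zeros `λ` whose first Durfee
square has side `k` and second Durfee square has side `l`; under the bijection
`|λ| = |λ⁽¹⁾| + |λ⁽²⁾| + |λ''| + k² + l²` and `ℓ(λ) = k + l + ℓ(λ'')`.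
(Partitions with at most `k` parts are encoded as nonincreasing `k`-tuples of nonnegative
integers, and partitions with zeros as nonincreasing functions `Fin m → ℕ`.) -/
theorem stmt_9 (k l : ℕ) (hlk : l ≤ k) :
    ∃ e : ({g : Fin k → ℕ // ∀ i j, i ≤ j → g j ≤ g i} ×
           {g : Fin l → ℕ // (∀ i j, i ≤ j → g j ≤ g i) ∧ ∀ i, g i ≤ k - l} ×
           {p : Σ m : ℕ, Fin m → ℕ //
              (∀ i j, i ≤ j → p.2 j ≤ p.2 i) ∧ ∀ i, p.2 i ≤ l}) ≃
          {p : Σ m : ℕ, Fin m → ℕ //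
              (∀ i j, i ≤ j → p.2 j ≤ p.2 i) ∧
              durfeeSide p.2 = k ∧ durfeeSide₂ p.2 = l},
      ∀ x, (∑ i, (e x).1.2 i) =
            (∑ i, x.1.1 i) + (∑ i, x.2.1.1 i) + (∑ i, x.2.2.1.2 i) + k ^ 2 + l ^ 2 ∧
          (e x).1.1 = k + l + x.2.2.1.1 :=
  ⟨durfeeEquiv hlk, fun x => ⟨sum_durfeeGlue _ _ _, rfl⟩⟩
end

section
/- Euler's identity: sum over n ≥ 0 of t^{binom(n,2)} x^n / (t;t)_n equals (-x;t)_∞ = ∏_{i≥0}(1 + x t^i), as formal power series in x and t. -/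
/-!
The series `S(y) = ∑ t^binom(n,2) y^n / (t;t)_n` satisfies `S(y) = (1 + y) S(t y)`, because its
coefficients obey `a_{n+1} (1 - t^{n+1}) = t^n a_n`. Iterating gives
`S(x) = ∏_{i<N} (1 + x t^i) · S(t^N x)`, and `S(t^N x) → S(0) = 1` by dominated convergence.
-/

open Filter Finset Topology

variable {𝕜 : Type*} [NormedField 𝕜] {t : 𝕜}

noncomputable def eulerCoeff (t : 𝕜) (n : ℕ) : 𝕜 :=
  t ^ n.choose 2 / ∏ i ∈ range n, (1 - t ^ (i + 1))

noncomputable def eulerSeries (t y : 𝕜) : 𝕜 :=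
  ∑' n, eulerCoeff t n * y ^ n

@[simp]
lemma eulerCoeff_zero (t : 𝕜) : eulerCoeff t 0 = 1 := by simp [eulerCoeff]

lemma eulerCoeff_succ (t : 𝕜) (n : ℕ) :
    eulerCoeff t (n + 1) = t ^ n * eulerCoeff t n / (1 - t ^ (n + 1)) := by
  rw [eulerCoeff, eulerCoeff, Nat.choose_succ_succ', Nat.choose_one_right, prod_range_succ,
    ← div_div]
  ring

lemma one_sub_norm_le_norm_one_sub_pow (ht : ‖t‖ ≤ 1) (n : ℕ) :
    1 - ‖t‖ ≤ ‖1 - t ^ (n + 1)‖ := by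
  calc 1 - ‖t‖ ≤ 1 - ‖t‖ ^ (n + 1) := by
        gcongr; exact pow_le_of_le_one (norm_nonneg t) ht n.succ_ne_zero
    _ ≤ ‖1 - t ^ (n + 1)‖ := by simpa using norm_sub_norm_le (1 : 𝕜) (t ^ (n + 1))

lemma eulerCoeff_succ_mul (ht : ‖t‖ < 1) (n : ℕ) :
    eulerCoeff t (n + 1) * (1 - t ^ (n + 1)) = t ^ n * eulerCoeff t n := by
  have hne : 1 - t ^ (n + 1) ≠ 0 := norm_pos_iff.mp <|
    (sub_pos.mpr ht).trans_le (one_sub_norm_le_norm_one_sub_pow ht.le n)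
  rw [eulerCoeff_succ, div_mul_cancel₀ _ hne]

lemma summable_norm_eulerCoeff_mul_pow (ht : ‖t‖ < 1) (y : 𝕜) :
    Summable fun n ↦ ‖eulerCoeff t n * y ^ n‖ := by
  have hgap : 0 < 1 - ‖t‖ := sub_pos.mpr ht
  have hratio : Tendsto (fun n ↦ ‖t‖ ^ n * ‖y‖ / (1 - ‖t‖)) atTop (𝓝 0) := by
    simpa using ((tendsto_pow_atTop_nhds_zero_of_lt_one (norm_nonneg t) ht).mul_const
      ‖y‖).div_const (1 - ‖t‖)
  refine summable_of_ratio_norm_eventually_le (r := 1 / 2) (by norm_num) ?_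
  filter_upwards [hratio.eventually_le_const (by norm_num : (0 : ℝ) < 1 / 2)] with n hn
  calc ‖‖eulerCoeff t (n + 1) * y ^ (n + 1)‖‖
      = ‖t‖ ^ n * ‖y‖ / ‖1 - t ^ (n + 1)‖ * ‖eulerCoeff t n * y ^ n‖ := by
        rw [norm_norm, eulerCoeff_succ]; simp only [norm_mul, norm_div, norm_pow]; ring
    _ ≤ ‖t‖ ^ n * ‖y‖ / (1 - ‖t‖) * ‖eulerCoeff t n * y ^ n‖ := by
        gcongr; exact one_sub_norm_le_norm_one_sub_pow ht.le n
    _ ≤ 1 / 2 * ‖‖eulerCoeff t n * y ^ n‖‖ := by rw [norm_norm]; gcongr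

variable [CompleteSpace 𝕜]

lemma summable_eulerCoeff_mul_pow (ht : ‖t‖ < 1) (y : 𝕜) :
    Summable fun n ↦ eulerCoeff t n * y ^ n :=
  (summable_norm_eulerCoeff_mul_pow ht y).of_norm

lemma eulerSeries_eq_one_add_mul (ht : ‖t‖ < 1) (y : 𝕜) :
    eulerSeries t y = (1 + y) * eulerSeries t (t * y) := by
  have hy := summable_eulerCoeff_mul_pow ht y
  have hty := summable_eulerCoeff_mul_pow ht (t * y)
  suffices eulerSeries t y - eulerSeries t (t * y) = y * eulerSeries t (t * y) by
    linear_combination this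
  calc eulerSeries t y - eulerSeries t (t * y)
      = ∑' n, eulerCoeff t n * (1 - t ^ n) * y ^ n := by
        rw [eulerSeries, eulerSeries, ← hy.tsum_sub hty]
        exact tsum_congr fun n ↦ by ring
    _ = ∑' n, eulerCoeff t (n + 1) * (1 - t ^ (n + 1)) * y ^ (n + 1) := by
        rw [(hy.sub hty).congr (fun n ↦ by ring) |>.tsum_eq_zero_add]
        simp
    _ = ∑' n, y * (eulerCoeff t n * (t * y) ^ n) :=
        tsum_congr fun n ↦ by rw [eulerCoeff_succ_mul ht]; ring
    _ = y * eulerSeries t (t * y) := tsum_mul_left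

lemma eulerSeries_eq_prod_mul (ht : ‖t‖ < 1) (x : 𝕜) (N : ℕ) :
    eulerSeries t x = (∏ i ∈ range N, (1 + x * t ^ i)) * eulerSeries t (t ^ N * x) := by
  induction N with
  | zero => simp
  | succ N ih =>
    rw [ih, eulerSeries_eq_one_add_mul ht (t ^ N * x), ← mul_assoc t, ← pow_succ',
      prod_range_succ]
    ring

lemma tendsto_eulerSeries_pow_mul (ht : ‖t‖ < 1) (x : 𝕜) :
    Tendsto (fun N ↦ eulerSeries t (t ^ N * x)) atTop (𝓝 1) := by
  have hlim : ∀ n, Tendsto (fun N ↦ eulerCoeff t n * (t ^ N * x) ^ n) atTop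
      (𝓝 (eulerCoeff t n * 0 ^ n)) := fun n ↦ by
    simpa using (((tendsto_pow_atTop_nhds_zero_of_norm_lt_one ht).mul_const x).pow n).const_mul
      (eulerCoeff t n)
  have hbound : ∀ N n, ‖eulerCoeff t n * (t ^ N * x) ^ n‖ ≤ ‖eulerCoeff t n * x ^ n‖ := by
    intro N n
    simp only [norm_mul, norm_pow]
    gcongr
    exact mul_le_of_le_one_left (norm_nonneg x) (pow_le_one₀ (norm_nonneg t) ht.le)
  have := tendsto_tsum_of_dominated_convergence (summable_norm_eulerCoeff_mul_pow ht x) hlim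
    (.of_forall (hbound ·))
  rwa [tsum_eq_single 0 fun n hn ↦ by simp [hn], pow_zero, mul_one, eulerCoeff_zero] at this

lemma multipliable_one_add_mul_pow (ht : ‖t‖ < 1) (x : 𝕜) :
    Multipliable fun i ↦ 1 + x * t ^ i :=
  multipliable_one_add_of_summable <| by
    simpa [norm_mul, norm_pow] using (summable_geometric_of_lt_one (norm_nonneg t) ht).mul_left ‖x‖

theorem eulerSeries_eq_tprod (ht : ‖t‖ < 1) (x : 𝕜) :
    eulerSeries t x = ∏' i, (1 + x * t ^ i) := by
  have hprod := (multipliable_one_add_mul_pow ht x).hasProd.tendsto_prod_nat.mul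
    (tendsto_eulerSeries_pow_mul ht x)
  simp_rw [← eulerSeries_eq_prod_mul ht, mul_one] at hprod
  exact tendsto_nhds_unique tendsto_const_nhds hprod

/-- Euler's identity: `∑_{n≥0} t^{binom(n,2)} x^n / (t;t)_n = (-x;t)_∞ = ∏_{i≥0}(1 + x t^i)`
(for `|t| < 1`, where all the series and products converge). -/
theorem stmt_13 (t x : ℝ) (ht : |t| < 1) :
    ∑' n : ℕ, t ^ (Nat.choose n 2) * x ^ n / ∏ i ∈ Finset.range n, (1 - t ^ (i + 1)) =
      ∏' i : ℕ, (1 + x * t ^ i) := by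
  simpa [eulerSeries, eulerCoeff, div_mul_eq_mul_div] using eulerSeries_eq_tprod (t := t) ht x
end

section
/- For fixed 0 < t < 1, H(x;t) > 0 whenever x < t^{-1} is real, and also H(t^{-i}; t) > 0 for every positive integer i; in particular H(t^{-i};t) ≠ 0. -/
/-!
Write the `k`-th summand of `H(x;t)` as `t^{k²} x^{2k} / (t;t)_k · Q_k(x)` with
`Q_k(x) = ∏_{j > k} (1 - t^j x)`. Since `|Q_k(x)| ≤ exp (|x| ∑ t^j)`, `(t;t)_k ≥ (t;t)_∞ > 0` and
`t^{k²} x^{2k}` decays faster than any geometric sequence, the series converges absolutely.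
An infinite product `∏ (1 - a_j)` with `∑ a_j` convergent and every `a_j < 1` is positive, being
the exponential of `∑ log (1 - a_j)`. For `x < 1/t` this makes every `Q_k(x)` positive; for
`x = t^{-i}` the factor `j = i` kills `Q_k` when `k < i`, while `Q_k > 0` for `k ≥ i`. Either way
`H` is a sum of nonnegative terms, one of which (`k = 0`, resp. `k = i`) is positive.
-/

open Real Filter Finset Topology

lemma tprod_one_sub_pos {a : ℕ → ℝ} (hs : Summable a) (h1 : ∀ j, a j < 1) :
    0 < ∏' j, (1 - a j) := by
  have hpos : ∀ j, 0 < 1 + -a j := fun j => by linarith [h1 j]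
  simp_rw [sub_eq_add_neg, ← rexp_tsum_eq_tprod hpos (summable_log_one_add_of_summable hs.neg)]
  exact exp_pos _

lemma abs_tprod_one_sub_le_exp_tsum_abs {a : ℕ → ℝ} (hs : Summable a) :
    |∏' j, (1 - a j)| ≤ exp (∑' j, |a j|) := by
  have hmul : Multipliable fun j => 1 - a j := by
    simpa only [sub_eq_add_neg] using Real.multipliable_one_add_of_summable hs.neg
  refine le_of_tendsto' hmul.hasProd.abs fun s => ?_
  calc ∏ j ∈ s, |1 - a j| ≤ ∏ j ∈ s, (1 + |a j|) :=
        Finset.prod_le_prod (fun _ _ => abs_nonneg _) fun j _ => abs_sub_le_iff.mpr ⟨by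
          linarith [neg_abs_le (a j), le_abs_self (a j)], by linarith [le_abs_self (a j)]⟩
    _ ≤ exp (∑ j ∈ s, |a j|) := prod_one_add_le_exp_sum s fun j => abs_nonneg (a j)
    _ ≤ exp (∑' j, |a j|) := exp_le_exp.mpr (hs.abs.sum_le_tsum s fun j _ => abs_nonneg (a j))

lemma tprod_one_sub_le_prod_range {a : ℕ → ℝ} (hs : Summable a) (h0 : ∀ j, 0 ≤ a j)
    (h1 : ∀ j, a j ≤ 1) (k : ℕ) : ∏' j, (1 - a j) ≤ ∏ j ∈ range k, (1 - a j) := by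
  have hmul : Multipliable fun j => 1 - a j := by
    simpa only [sub_eq_add_neg] using Real.multipliable_one_add_of_summable hs.neg
  refine Antitone.le_of_tendsto (antitone_nat_of_succ_le fun n => ?_)
    hmul.hasProd.tendsto_prod_nat k
  rw [prod_range_succ]
  exact mul_le_of_le_one_right (prod_nonneg fun j _ => sub_nonneg.mpr (h1 j))
    (sub_le_self _ (h0 n))

lemma summable_pow_sq_mul_pow {t : ℝ} (ht0 : 0 ≤ t) (ht1 : t < 1) (y : ℝ) :
    Summable fun k : ℕ => t ^ (k ^ 2) * y ^ k := by
  have hlim : Tendsto (fun k : ℕ => t ^ k * |y|) atTop (𝓝 0) := by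
    simpa using (tendsto_pow_atTop_nhds_zero_of_lt_one ht0 ht1).mul_const |y|
  refine .of_norm_bounded_eventually_nat summable_geometric_two ?_
  filter_upwards [hlim.eventually_le_const (by norm_num : (0:ℝ) < 1 / 2)] with k hk
  calc ‖t ^ (k ^ 2) * y ^ k‖ = (t ^ k * |y|) ^ k := by
        rw [norm_mul, norm_pow, norm_pow, Real.norm_of_nonneg ht0, Real.norm_eq_abs, mul_pow,
          ← pow_mul, sq]
    _ ≤ (1 / 2) ^ k := pow_le_pow_left₀ (by positivity) hk k

section

variable {t : ℝ}

lemma summable_pow_add_mul (ht0 : 0 ≤ t) (ht1 : t < 1) (k : ℕ) (x : ℝ) :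
    Summable fun j : ℕ => t ^ (k + 1 + j) * x := by
  simp_rw [pow_add _ (k + 1)]
  exact ((summable_geometric_of_lt_one ht0 ht1).mul_left _).mul_right x

lemma mul_lt_one_of_le_of_lt_inv {x s : ℝ} (ht0 : 0 < t) (hs0 : 0 ≤ s) (hst : s ≤ t)
    (hx : x < t⁻¹) : s * x < 1 := by
  rcases le_or_gt x 0 with hx0 | hx0
  · linarith [mul_nonpos_of_nonneg_of_nonpos hs0 hx0]
  · calc s * x ≤ t * x := mul_le_mul_of_nonneg_right hst hx0.le
      _ < t * t⁻¹ := mul_lt_mul_of_pos_left hx ht0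
      _ = 1 := mul_inv_cancel₀ ht0.ne'

noncomputable def tailProd (t x : ℝ) (k : ℕ) : ℝ := ∏' j : ℕ, (1 - t ^ (k + 1 + j) * x)

noncomputable def hTerm (t x : ℝ) (k : ℕ) : ℝ :=
  t ^ (k ^ 2) * x ^ (2 * k) / (∏ i ∈ range k, (1 - t ^ (i + 1))) * tailProd t x k

lemma abs_tailProd_le (ht0 : 0 ≤ t) (ht1 : t < 1) (x : ℝ) (k : ℕ) :
    |tailProd t x k| ≤ exp (∑' j : ℕ, t ^ j * |x|) := by
  refine (abs_tprod_one_sub_le_exp_tsum_abs (summable_pow_add_mul ht0 ht1 k x)).trans ?_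
  refine exp_le_exp.mpr (Summable.tsum_le_tsum (fun j => ?_)
    (summable_pow_add_mul ht0 ht1 k x).abs
    ((summable_geometric_of_lt_one ht0 ht1).mul_right _))
  rw [abs_mul, abs_of_nonneg (pow_nonneg ht0 _)]
  exact mul_le_mul_of_nonneg_right (pow_le_pow_of_le_one ht0 ht1.le (by omega)) (abs_nonneg x)

lemma tailProd_pos (ht0 : 0 ≤ t) (ht1 : t < 1) {x : ℝ} {k : ℕ}
    (h : ∀ j : ℕ, t ^ (k + 1 + j) * x < 1) : 0 < tailProd t x k :=
  tprod_one_sub_pos (summable_pow_add_mul ht0 ht1 k x) h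

lemma prod_range_one_sub_pow_pos (ht0 : 0 ≤ t) (ht1 : t < 1) (k : ℕ) :
    0 < ∏ i ∈ range k, (1 - t ^ (i + 1)) :=
  prod_pos fun i _ => sub_pos.mpr (pow_lt_one₀ ht0 ht1 (by omega))

lemma summable_hTerm (ht0 : 0 ≤ t) (ht1 : t < 1) (x : ℝ) : Summable (hTerm t x) := by
  have hpow : Summable fun j : ℕ => t ^ (j + 1) :=
    (summable_nat_add_iff 1).mpr (summable_geometric_of_lt_one ht0 ht1)
  have hP := tprod_one_sub_pos hpow fun j => pow_lt_one₀ ht0 ht1 (by omega)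
  set P := ∏' j : ℕ, (1 - t ^ (j + 1))
  set M := exp (∑' j : ℕ, t ^ j * |x|)
  refine .of_norm_bounded ((summable_pow_sq_mul_pow ht0 ht1 (x ^ 2)).mul_right (M / P)) fun k => ?_
  have hPk : P ≤ ∏ i ∈ range k, (1 - t ^ (i + 1)) :=
    tprod_one_sub_le_prod_range hpow (fun j => pow_nonneg ht0 _)
      (fun j => pow_le_one₀ ht0 ht1.le) k
  rw [hTerm, norm_mul, norm_div, div_mul_eq_mul_div, mul_div_assoc, pow_mul]
  gcongr
  · simp [abs_of_nonneg ht0]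
  · exact abs_tailProd_le ht0 ht1 x k
  · rw [Real.norm_of_nonneg (prod_range_one_sub_pow_pos ht0 ht1 k).le]
    exact hPk

lemma tsum_hTerm_pos (ht0 : 0 ≤ t) (ht1 : t < 1) {x : ℝ} (hnn : ∀ k, 0 ≤ tailProd t x k)
    {k : ℕ} (hk : 0 < hTerm t x k) : 0 < ∑' k, hTerm t x k := by
  refine (summable_hTerm ht0 ht1 x).tsum_pos (fun n => ?_) k hk
  have hx : 0 ≤ x ^ (2 * n) := by rw [pow_mul]; positivity
  have := prod_range_one_sub_pow_pos ht0 ht1 n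
  exact mul_nonneg (by positivity) (hnn n)

lemma tsum_hTerm_pos_of_lt_inv (ht0 : 0 < t) (ht1 : t < 1) {x : ℝ} (hx : x < t⁻¹) :
    0 < ∑' k, hTerm t x k := by
  have hQ (k : ℕ) : 0 < tailProd t x k := tailProd_pos ht0.le ht1 fun j =>
    mul_lt_one_of_le_of_lt_inv ht0 (pow_nonneg ht0.le _)
      (pow_le_of_le_one ht0.le ht1.le (by omega)) hx
  exact tsum_hTerm_pos ht0.le ht1 (fun k => (hQ k).le) (k := 0) (by simpa [hTerm] using hQ 0)

lemma tsum_hTerm_inv_pow_pos (ht0 : 0 < t) (ht1 : t < 1) (i : ℕ) :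
    0 < ∑' k, hTerm t (t⁻¹ ^ i) k := by
  have hpow {m : ℕ} (hm : i ≤ m) : t ^ m * t⁻¹ ^ i = t ^ (m - i) := by
    rw [← Nat.sub_add_cancel hm, pow_add, inv_pow, Nat.add_sub_cancel,
      mul_inv_cancel_right₀ (pow_ne_zero i ht0.ne')]
  have hQpos {k : ℕ} (hk : i ≤ k) : 0 < tailProd t (t⁻¹ ^ i) k :=
    tailProd_pos ht0.le ht1 fun j => by
      rw [hpow (by omega)]; exact pow_lt_one₀ ht0.le ht1 (by omega)
  -- for `k < i` the factor `j = i - k - 1` is `1 - t ^ i * t⁻¹ ^ i = 0`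
  have hQzero {k : ℕ} (hk : k < i) : tailProd t (t⁻¹ ^ i) k = 0 :=
    tprod_of_exists_eq_zero ⟨i - k - 1, by
      rw [show k + 1 + (i - k - 1) = i by omega, hpow le_rfl, Nat.sub_self, pow_zero, sub_self]⟩
  refine tsum_hTerm_pos ht0.le ht1 (fun k => ?_) (k := i) ?_
  · rcases lt_or_ge k i with hk | hk
    · exact (hQzero hk).ge
    · exact (hQpos hk).le
  · have := prod_range_one_sub_pow_pos ht0.le ht1 i
    exact mul_pos (by positivity) (hQpos le_rfl)

end

/-- For fixed `0 < t < 1` and `H(x;t) = ∑_{k≥0} t^{k²} x^{2k} / (t;t)_k · ∏_{j≥k+1}(1 - t^j x)`: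
`H(x;t) > 0` for every real `x < t⁻¹`, and `H(t^{-i};t) > 0` (in particular `≠ 0`) for every
positive integer `i`. -/
theorem stmt_17 (t : ℝ) (ht0 : 0 < t) (ht1 : t < 1) (H : ℝ → ℝ)
    (hH : ∀ x : ℝ, H x = ∑' k : ℕ, t ^ (k ^ 2) * x ^ (2 * k) /
        (∏ i ∈ Finset.range k, (1 - t ^ (i + 1))) * ∏' j : ℕ, (1 - t ^ (k + 1 + j) * x)) :
    (∀ x : ℝ, x < t⁻¹ → 0 < H x) ∧
      ∀ i : ℕ, 0 < i → 0 < H (t⁻¹ ^ i) ∧ H (t⁻¹ ^ i) ≠ 0 := by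
  have hH' (x : ℝ) : H x = ∑' k, hTerm t x k := hH x
  refine ⟨fun x hx => hH' x ▸ tsum_hTerm_pos_of_lt_inv ht0 ht1 hx, fun i _ => ?_⟩
  have hpos : 0 < H (t⁻¹ ^ i) := hH' _ ▸ tsum_hTerm_inv_pow_pos ht0 ht1 i
  exact ⟨hpos, hpos.ne'⟩
end
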